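/- Let Q be a finite acyclic quiver and R a quasi-Frobenius ring. A representation M ∈ Rep(Q,R) is an injective object of the category Rep(Q,R) if and only if M is RI-fibrant and M_j is an injective R-module for every vertex j ∈ Q_0. -/

import Mathlib

open CategoryTheory CategoryTheory.Limits

/-- An `R`-linear map factors through a projective `R`-module. -/
def FactorsThroughProjective (R : Type) [Ring R] {M N : Type} [AddCommGroup M] [Module R M]
    [AddCommGroup N] [Module R N] (f : M →ₗ[R] N) : Prop :=
  ∃ (P : Type) (_ : AddCommGroup P) (_ : Module R P) (_ : Module.Projective R P)
    (a : M →ₗ[R] P) (b : P →ₗ[R] N), b ∘ₗ a = f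

/-- An `R`-linear map is a stable equivalence if it becomes an isomorphism in the stable
module category: there is `g` in the other direction such that `g ∘ f - id` and `f ∘ g - id`
each factor through a projective module. -/
def IsStableEquiv (R : Type) [Ring R] {M N : Type} [AddCommGroup M] [Module R M]
    [AddCommGroup N] [Module R N] (f : M →ₗ[R] N) : Prop :=
  ∃ g : N →ₗ[R] M,
    FactorsThroughProjective R (g ∘ₗ f - LinearMap.id) ∧
    FactorsThroughProjective R (f ∘ₗ g - LinearMap.id)

/-- A quasi-Frobenius ring: left and right Noetherian, and injective over itself
as a left and as a right module. -/
class IsQuasiFrobenius (R : Type) [Ring R] : Prop where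
  noetherian_left : IsNoetherianRing R
  noetherian_right : IsNoetherianRing Rᵐᵒᵖ
  selfInjective_left : Module.Injective R R
  selfInjective_right : Module.Injective Rᵐᵒᵖ Rᵐᵒᵖ

/-- The category of representations of a quiver `V` over a ring `R`:
functors from the free path category on `V` to `R`-modules. -/
abbrev QuivRep (R : Type) [Ring R] (V : Type) [Quiver.{1} V] : Type _ :=
  Paths V ⥤ ModuleCat.{0} R

namespace QuivRep

variable {R : Type} [Ring R] {V : Type} [Quiver.{1} V]

/-- The `R`-module of a representation at a vertex `j`. -/
abbrev vtx (M : QuivRep R V) (j : V) : ModuleCat R := M.obj ((Paths.of V).obj j)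

/-- The structure map of a representation along an arrow `a : i ⟶ j`. -/
abbrev arrowMap (M : QuivRep R V) {i j : V} (a : i ⟶ j) : M.vtx i ⟶ M.vtx j :=
  M.map ((Paths.of V).map a)

/-- The component at a vertex `j` of a morphism of representations. -/
abbrev app {M N : QuivRep R V} (f : M ⟶ N) (j : V) : ↥(M.vtx j) →ₗ[R] ↥(N.vtx j) := (f.app ((Paths.of V).obj j)).hom

/-- A representation is monic if, at each vertex `j`, the natural map
`⊕_{a : i ⟶ j} M_i → M_j`, `(x_a) ↦ Σ_a m_a (x_a)`, is injective. -/
def IsMonic (M : QuivRep R V) : Prop :=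
  ∀ j : V,
    letI : DecidableEq (Σ i : V, i ⟶ j) := Classical.decEq _
    Function.Injective
      (DirectSum.toModule R (Σ i : V, i ⟶ j) (M.vtx j)
        (fun a => ((M.arrowMap a.2).hom : ↥(M.vtx a.1) →ₗ[R] ↥(M.vtx j))))

/-- A representation is RI-fibrant if, at each vertex `j`, the natural map
`M_j → ∏_{a : j ⟶ i} M_i`, `x ↦ (m_a x)_a`, is surjective. -/
def IsRIFibrant (M : QuivRep R V) : Prop :=
  ∀ j : V,
    Function.Surjective
      (LinearMap.pi
        (fun a : Σ i : V, (j ⟶ i) => ((M.arrowMap a.2).hom : ↥(M.vtx j) →ₗ[R] ↥(M.vtx a.1))))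

end QuivRep

/-- A quiver is finite and acyclic: finitely many vertices and arrows, and the only
paths from a vertex to itself are trivial. -/
def IsFiniteAcyclic (V : Type) [Quiver.{1} V] : Prop :=
  Nonempty (Fintype V) ∧ (∀ i j : V, Nonempty (Fintype (i ⟶ j))) ∧
    ∀ (i : V) (p : Quiver.Path i i), p.length = 0

/-!
If `M` is injective, embed it through injective hulls `M_j → I_j` into the coinduced
representation `k ↦ ∏_{p : k ⟶ j} I_j`. The latter is pointwise injective and RI-fibrant, since a
path leaving `k` is determined by its first arrow and the rest, so `M` is a retract of it and
inherits both properties.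

Conversely, over a quasi-Frobenius ring the kernel of a surjection between injective modules is
injective: by Baer's criterion this comes down to lifting elements killed by a left ideal `I`,
which works because `R ⧸ I` embeds into a finite free module, a consequence of the double
annihilator property `lAnn (rAnn I) = I`. So each structure map `M_j → ∏_{a : j ⟶ i} M_i` is a
surjection with injective kernel, and a morphism `X ⟶ M` extends along a monomorphism `X ⟶ Y`
one vertex at a time, by well-founded recursion from the sinks of the acyclic quiver.
-/

universe u v w

section RightSelfInjective

open MulOpposite

variable {R : Type u} [Ring R]

theorem Module.Injective.exists_comp_eq_of_ker_le {M N : Type*} {Q : Type v} [Small.{v} R]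
    [AddCommGroup M] [Module R M] [AddCommGroup N] [Module R N] [AddCommGroup Q] [Module R Q]
    [Module.Injective R Q]
    (τ : M →ₗ[R] N) (σ : M →ₗ[R] Q) (h : LinearMap.ker τ ≤ LinearMap.ker σ) :
    ∃ g : N →ₗ[R] Q, g ∘ₗ τ = σ := by
  obtain ⟨g, hg⟩ := Module.Injective.extension_property R Q _ _ ((LinearMap.ker τ).liftQ τ le_rfl)
    (LinearMap.ker_eq_bot.mp (Submodule.ker_liftQ_eq_bot _ _ _ le_rfl))
    ((LinearMap.ker τ).liftQ σ h)
  exact ⟨g, LinearMap.ext fun x => LinearMap.congr_fun hg (Submodule.Quotient.mk x)⟩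

theorem Ideal.mem_span_range_of_forall_mul_eq_zero [Module.Injective Rᵐᵒᵖ Rᵐᵒᵖ]
    {ι : Type*} [Fintype ι] (a : ι → R) {x : R}
    (hx : ∀ z, (∀ i, a i * z = 0) → x * z = 0) : x ∈ Ideal.span (Set.range a) := by
  classical
  let τ : Rᵐᵒᵖ →ₗ[Rᵐᵒᵖ] (ι → Rᵐᵒᵖ) :=
    LinearMap.pi fun i => LinearMap.toSpanSingleton Rᵐᵒᵖ Rᵐᵒᵖ (op (a i))
  have hker : LinearMap.ker τ ≤ LinearMap.ker (LinearMap.toSpanSingleton Rᵐᵒᵖ Rᵐᵒᵖ (op x)) := by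
    intro z hz
    have hz' : ∀ i, a i * unop z = 0 := fun i => op_injective (congrFun hz i)
    exact congrArg op (hx _ hz')
  obtain ⟨g, hg⟩ := Module.Injective.exists_comp_eq_of_ker_le τ _ hker
  -- `g` is left multiplication by a row vector `c`; evaluating `g ∘ τ = (op x) • ·` at `1`
  -- gives `x = ∑ c i * a i`
  have h1 := LinearMap.congr_fun hg 1
  rw [LinearMap.comp_apply, LinearMap.pi_apply_eq_sum_univ] at h1
  refine (Submodule.mem_span_range_iff_exists_fun R).mpr
    ⟨fun i => unop (g fun j => if i = j then 1 else 0), ?_⟩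
  apply op_injective
  simpa [τ, Finset.op_sum] using h1

def Ideal.rightAnnihilator (I : Ideal R) : Submodule Rᵐᵒᵖ Rᵐᵒᵖ where
  carrier := {z | ∀ i ∈ I, i * unop z = 0}
  add_mem' hz hw i hi := by simp [mul_add, hz i hi, hw i hi]
  zero_mem' i _ := by simp
  smul_mem' s z hz i hi := by
    change i * (unop z * unop s) = 0
    rw [← mul_assoc, hz i hi, zero_mul]

theorem Ideal.mem_of_forall_mul_eq_zero [IsNoetherianRing R] [Module.Injective Rᵐᵒᵖ Rᵐᵒᵖ]
    (I : Ideal R) {x : R} (hx : ∀ z, (∀ i ∈ I, i * z = 0) → x * z = 0) : x ∈ I := by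
  obtain ⟨n, a, rfl⟩ := Submodule.fg_iff_exists_fin_generating_family.mp (IsNoetherian.noetherian I)
  refine Ideal.mem_span_range_of_forall_mul_eq_zero a fun z hz => hx z fun i hi => ?_
  have : Submodule.span R (Set.range a) ≤ LinearMap.ker (LinearMap.mulRight R z) :=
    Submodule.span_le.mpr (Set.range_subset_iff.mpr hz)
  exact this hi

theorem Ideal.exists_injective_quotient_to_pi [IsNoetherianRing R] [IsNoetherianRing Rᵐᵒᵖ]
    [Module.Injective Rᵐᵒᵖ Rᵐᵒᵖ] (I : Ideal R) :
    ∃ (n : ℕ) (χ : (R ⧸ I) →ₗ[R] (Fin n → R)), Function.Injective χ := by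
  obtain ⟨n, b, hb⟩ :=
    Submodule.fg_iff_exists_fin_generating_family.mp (IsNoetherian.noetherian I.rightAnnihilator)
  let χ : R →ₗ[R] (Fin n → R) := LinearMap.pi fun k => LinearMap.toSpanSingleton R R (unop (b k))
  have hχ : LinearMap.ker χ = I := by
    ext r
    have hr : r ∈ LinearMap.ker χ ↔ ∀ k, r * unop (b k) = 0 := funext_iff
    rw [hr]
    refine ⟨fun h => I.mem_of_forall_mul_eq_zero fun z hz => ?_, fun hr k => ?_⟩
    · have hspan : Submodule.span Rᵐᵒᵖ (Set.range b) ≤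
          LinearMap.ker (LinearMap.toSpanSingleton Rᵐᵒᵖ Rᵐᵒᵖ (op r)) :=
        Submodule.span_le.mpr (Set.range_subset_iff.mpr fun k => congrArg op (h k))
      rw [hb] at hspan
      exact op_injective (hspan (show op z ∈ I.rightAnnihilator from hz))
    · exact (hb ▸ Submodule.subset_span (Set.mem_range_self k) : b k ∈ I.rightAnnihilator) r hr
  exact ⟨n, I.liftQ χ hχ.ge, LinearMap.ker_eq_bot.mp (Submodule.ker_liftQ_eq_bot _ _ _ hχ.le)⟩

end RightSelfInjective

section InjectiveKernel

variable {R : Type u} [Ring R] {E : Type v} {P : Type w} [AddCommGroup E] [Module R E]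
  [AddCommGroup P] [Module R P]

theorem LinearMap.exists_rightInverse_of_injective_ker {Φ : E →ₗ[R] P}
    (hΦ : Function.Surjective Φ) [Module.Injective R (LinearMap.ker Φ)] :
    ∃ s : P →ₗ[R] E, Φ ∘ₗ s = LinearMap.id := by
  obtain ⟨ρ, hρ⟩ := Module.Injective.out (LinearMap.ker Φ).subtype Subtype.val_injective
    LinearMap.id
  let D : E →ₗ[R] E := LinearMap.id - (LinearMap.ker Φ).subtype ∘ₗ ρ
  have hD : LinearMap.ker Φ ≤ LinearMap.ker D := fun x hx => by
    simpa [D, sub_eq_zero] using congrArg Subtype.val (hρ ⟨x, hx⟩).symm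
  refine ⟨(LinearMap.ker Φ).liftQ D hD ∘ₗ (Φ.quotKerEquivOfSurjective hΦ).symm.toLinearMap, ?_⟩
  ext p
  obtain ⟨x, rfl⟩ := hΦ p
  simp [D, LinearMap.quotKerEquivOfSurjective_symm_apply]

theorem exists_preimage_and_forall_smul_eq_zero [Small.{w} R] [IsNoetherianRing R]
    [IsNoetherianRing Rᵐᵒᵖ] [Module.Injective Rᵐᵒᵖ Rᵐᵒᵖ] [Module.Injective R P]
    {Φ : E →ₗ[R] P} (hΦ : Function.Surjective Φ) (I : Ideal R) {u : P}
    (hu : ∀ i ∈ I, i • u = 0) : ∃ e, Φ e = u ∧ ∀ i ∈ I, i • e = 0 := by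
  have hu' : I ≤ LinearMap.ker (LinearMap.toSpanSingleton R P u) := hu
  obtain ⟨n, χ, hχ⟩ := I.exists_injective_quotient_to_pi
  obtain ⟨β, hβ⟩ := Module.Injective.extension_property R P _ _ χ hχ
    (I.liftQ (LinearMap.toSpanSingleton R P u) hu')
  obtain ⟨L, hL⟩ := Module.projective_lifting_property Φ β hΦ
  refine ⟨L (χ (Submodule.Quotient.mk 1)), ?_, fun i hi => ?_⟩
  · have h := LinearMap.congr_fun (congrArg (· ∘ₗ χ) hL |>.trans hβ) (Submodule.Quotient.mk 1)
    rwa [LinearMap.comp_apply, LinearMap.comp_apply, Submodule.liftQ_apply,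
      LinearMap.toSpanSingleton_apply, one_smul] at h
  · rw [← map_smul, ← map_smul, ← Submodule.Quotient.mk_smul, smul_eq_mul, mul_one,
      (Submodule.Quotient.mk_eq_zero I).mpr hi, map_zero, map_zero]

theorem Module.Injective.ker_of_surjective [Small.{v} R] [Small.{w} R] [IsNoetherianRing R]
    [IsNoetherianRing Rᵐᵒᵖ] [Module.Injective Rᵐᵒᵖ Rᵐᵒᵖ] [Module.Injective R E]
    [Module.Injective R P] {Φ : E →ₗ[R] P} (hΦ : Function.Surjective Φ) :
    Module.Injective R (LinearMap.ker Φ) := by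
  refine Module.Baer.injective fun I φ => ?_
  obtain ⟨φ', hφ'⟩ := Module.Injective.extension_property R E _ _ I.subtype
    Subtype.val_injective ((LinearMap.ker Φ).subtype ∘ₗ φ)
  have hφ'I (i : R) (hi : i ∈ I) : φ' i = φ ⟨i, hi⟩ := LinearMap.congr_fun hφ' ⟨i, hi⟩
  obtain ⟨e, he, hIe⟩ := exists_preimage_and_forall_smul_eq_zero hΦ I (u := Φ (φ' 1))
    fun i hi => by rw [← map_smul, ← map_smul, smul_eq_mul, mul_one, hφ'I i hi]; exact (φ _).2
  let ψ : R →ₗ[R] E := φ' - LinearMap.toSpanSingleton R E e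
  have hψ (r : R) : ψ r ∈ LinearMap.ker Φ := by
    have : φ' r = r • φ' 1 := by rw [← map_smul, smul_eq_mul, mul_one]
    simp [ψ, this, he]
  exact ⟨ψ.codRestrict _ hψ, fun x hx => Subtype.ext (by simp [ψ, hφ'I x hx, hIe x hx])⟩

theorem LinearMap.exists_lift_of_injective_ker {X Y : Type v} [AddCommGroup X] [Module R X]
    [AddCommGroup Y] [Module R Y] {Φ : E →ₗ[R] P} (hΦ : Function.Surjective Φ)
    [Module.Injective R (LinearMap.ker Φ)] {g : X →ₗ[R] Y} (hg : Function.Injective g)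
    (f : X →ₗ[R] E) (ψ : Y →ₗ[R] P) (hc : Φ ∘ₗ f = ψ ∘ₗ g) :
    ∃ h : Y →ₗ[R] E, h ∘ₗ g = f ∧ Φ ∘ₗ h = ψ := by
  obtain ⟨s, hs⟩ := LinearMap.exists_rightInverse_of_injective_ker hΦ
  have hs' (p : P) : Φ (s p) = p := LinearMap.congr_fun hs p
  -- correct the lift `s ∘ ψ` by a map into `ker Φ` that extends the error `f - s ∘ ψ ∘ g`
  have herr (x : X) : (f - s ∘ₗ ψ ∘ₗ g) x ∈ LinearMap.ker Φ := by
    simp [hs', ← LinearMap.comp_apply Φ f, hc]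
  obtain ⟨k, hk⟩ := Module.Injective.out g hg ((f - s ∘ₗ ψ ∘ₗ g).codRestrict _ herr)
  refine ⟨s ∘ₗ ψ + (LinearMap.ker Φ).subtype ∘ₗ k, LinearMap.ext fun x => ?_,
    LinearMap.ext fun y => ?_⟩
  · simp [hk x]
  · simp [hs']

end InjectiveKernel

theorem WellFounded.exists_forall_of_step {α : Sort*} {β : α → Sort*} {r : α → α → Prop}
    (hr : WellFounded r) (P : ∀ a, β a → Prop) (C : ∀ a, (∀ b, r b a → β b) → β a → Prop)
    (step : ∀ a (F : ∀ b, r b a → β b), (∀ b h, P b (F b h)) → ∃ x, P a x ∧ C a F x) :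
    ∃ F : ∀ a, β a, ∀ a, P a (F a) ∧ C a (fun b _ => F b) (F a) := by
  let G : ∀ a, {x // P a x} := hr.fix fun a F =>
    ⟨_, (step a (fun b h => (F b h).1) (fun b h => (F b h).2)).choose_spec.1⟩
  refine ⟨fun a => (G a).1, fun a => ⟨(G a).2, ?_⟩⟩
  show C a (fun b _ => (G b).1) (G a).1
  rw [show G a = _ from hr.fix_eq _ a]
  exact (step a _ fun b _ => (G b).2).choose_spec.2

theorem Quiver.Path.toPath_comp_injective {V : Type*} [Quiver V] {k : V} :
    ∀ {j : V}, Function.Injective fun x : Σ i, (k ⟶ i) × Quiver.Path i j => x.2.1.toPath.comp x.2.2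
  | _, ⟨_, _, .nil⟩, ⟨_, _, .nil⟩, h => by cases h; rfl
  | _, ⟨_, _, .nil⟩, ⟨_, _, .cons _ _⟩, h
  | _, ⟨_, _, .cons _ _⟩, ⟨_, _, .nil⟩, h => by simpa using congrArg Quiver.Path.length h
  | _, ⟨_, a, .cons q e⟩, ⟨_, a', .cons q' e'⟩, h => by
    change (a.toPath.comp q).cons e = (a'.toPath.comp q').cons e' at h
    obtain rfl := Quiver.Path.obj_eq_of_cons_eq_cons h
    obtain rfl := eq_of_heq (Quiver.Path.hom_heq_of_cons_eq_cons h)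
    cases toPath_comp_injective (a₁ := ⟨_, a, q⟩) (a₂ := ⟨_, a', q'⟩)
      (eq_of_heq (Quiver.Path.heq_of_cons_eq_cons h))
    rfl

theorem IsFiniteAcyclic.wellFounded {V : Type} [Quiver.{1} V] (hV : IsFiniteAcyclic V) :
    WellFounded fun i j : V => Nonempty (j ⟶ i) := by
  obtain ⟨⟨_⟩, -, hacyc⟩ := hV
  let r : V → V → Prop := fun i j => ∃ p : Quiver.Path j i, 0 < p.length
  have : IsTrans V r := ⟨fun _ _ _ ⟨p, hp⟩ ⟨q, _⟩ => ⟨q.comp p, by simp; omega⟩⟩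
  have : Std.Irrefl r := ⟨fun a ⟨p, hp⟩ => by simp [hacyc a p] at hp⟩
  exact Subrelation.wf (fun ⟨a⟩ => ⟨a.toPath, by simp⟩) (Finite.wellFounded_of_trans_of_irrefl r)

def Quiver.Path.arrows {V : Type*} [Quiver V] {a : V} :
    ∀ {b : V}, Quiver.Path a b → List (Σ x y : V, x ⟶ y)
  | _, .nil => []
  | _, .cons p e => ⟨_, _, e⟩ :: p.arrows

theorem Quiver.Path.arrows_injective {V : Type*} [Quiver V] {a : V} :
    Function.Injective fun p : Σ b, Quiver.Path a b => p.2.arrows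
  | ⟨_, .nil⟩, ⟨_, .nil⟩, _ => rfl
  | ⟨_, .nil⟩, ⟨_, .cons _ _⟩, h | ⟨_, .cons _ _⟩, ⟨_, .nil⟩, h => by cases h
  | ⟨_, .cons p e⟩, ⟨_, .cons q e'⟩, h => by
    injection h with he hpq
    cases arrows_injective (a₁ := ⟨_, p⟩) (a₂ := ⟨_, q⟩) hpq
    cases he
    rfl

instance Quiver.Path.small {V : Type u} [Quiver.{v} V] [Small.{w} V]
    [∀ a b : V, Small.{w} (a ⟶ b)] (a b : V) : Small.{w} (Quiver.Path a b) :=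
  small_of_injective (Quiver.Path.arrows_injective.comp (sigma_mk_injective (i := b)))

instance CategoryTheory.Paths.small_hom {V : Type u} [Quiver.{v} V] [Small.{w} V]
    [∀ a b : V, Small.{w} (a ⟶ b)] (a b : Paths V) : Small.{w} (a ⟶ b) :=
  Quiver.Path.small (V := V) a b

namespace QuivRep

variable {R : Type} [Ring R] {V : Type} [Quiver.{1} V]

theorem IsRIFibrant.of_retract {M N : QuivRep R V} (h : Retract M N) (hN : N.IsRIFibrant) :
    M.IsRIFibrant := by
  intro k w
  obtain ⟨u, hu⟩ := hN k fun a => h.i.app _ (w a)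
  refine ⟨h.r.app _ u, funext fun a => ?_⟩
  calc M.arrowMap a.2 (h.r.app _ u) = h.r.app _ (N.arrowMap a.2 u) :=
        (NatTrans.naturality_apply h.r _ u).symm
    _ = h.r.app _ (h.i.app _ (w a)) := congrArg _ (congrFun hu a)
    _ = w a := by
      simpa only [NatTrans.comp_app, NatTrans.id_app, ConcreteCategory.comp_apply,
        ConcreteCategory.id_apply] using
        ConcreteCategory.congr_hom (NatTrans.congr_app h.retract _) (w a)

section Coinduced

variable [∀ i j : V, Small.{0} (i ⟶ j)] {I : V → ModuleCat.{0} R}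

/-- The representation `k ↦ ∏_j ∏_{p : k ⟶ j} I_j`; a morphism `M ⟶ coind I` amounts to a family
of maps `M_j ⟶ I_j`. The hom-types of `Paths V` live in `Type 1`, hence the `Shrink`. -/
noncomputable def coind (I : V → ModuleCat.{0} R) : QuivRep R V where
  obj k := ModuleCat.of R (∀ j : V, Shrink.{0} (k ⟶ (Paths.of V).obj j) → I j)
  map p := ModuleCat.ofHom <| LinearMap.pi fun j =>
    LinearMap.funLeft R (I j) (fun q => equivShrink _ (p ≫ (equivShrink _).symm q)) ∘ₗ
      LinearMap.proj j
  map_id k := by ext; simp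
  map_comp p q := by ext; simp

namespace coind

variable {k : Paths V}

noncomputable def eval (j : V) (q : k ⟶ (Paths.of V).obj j) : (coind I).obj k →ₗ[R] I j :=
  LinearMap.proj (equivShrink _ q) ∘ₗ LinearMap.proj j

noncomputable def mk (f : ∀ j : V, (k ⟶ (Paths.of V).obj j) → I j) : (coind I).obj k :=
  (fun j q => f j ((equivShrink _).symm q) : ∀ j : V, Shrink.{0} (k ⟶ (Paths.of V).obj j) → I j)

@[simp]
theorem eval_mk (f : ∀ j : V, (k ⟶ (Paths.of V).obj j) → I j) (j : V) (q) :
    eval j q (mk f) = f j q :=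
  congrArg (f j) ((equivShrink _).symm_apply_apply q)

@[simp]
theorem eval_map {l : Paths V} (p : k ⟶ l) (x : (coind I).obj k) (j : V) (q) :
    eval j q ((coind I).map p x) = eval j (p ≫ q) x := by
  change (x : ∀ j : V, Shrink.{0} (k ⟶ (Paths.of V).obj j) → I j) j
    (equivShrink _ (p ≫ (equivShrink _).symm (equivShrink _ q))) = _
  rw [Equiv.symm_apply_apply]
  rfl

theorem ext {x y : (coind I).obj k} (h : ∀ j q, eval j q x = eval j q y) : x = y :=
  funext fun j => funext fun s => by
    have h' : ∀ s', x j (equivShrink _ s') = y j (equivShrink _ s') := h j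
    simpa using h' ((equivShrink _).symm s)

end coind

theorem coind_isRIFibrant (I : V → ModuleCat.{0} R) : (coind I).IsRIFibrant := by
  intro k G
  -- a path leaving `k` determines its first arrow, so `G` extends to all paths leaving `k`
  refine ⟨coind.mk fun j => Function.extend
    (fun y : Σ i, (k ⟶ i) × Quiver.Path i j => y.2.1.toPath.comp y.2.2)
    (fun y => coind.eval j y.2.2 (G ⟨y.1, y.2.1⟩)) 0, funext fun a => coind.ext fun j q => ?_⟩
  simp only [LinearMap.pi_apply, coind.eval_map, coind.eval_mk]
  exact Quiver.Path.toPath_comp_injective.extend_apply _ _ ⟨a.1, a.2, q⟩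

instance (I : V → ModuleCat.{0} R) [∀ j, Module.Injective R (I j)] (k : Paths V) :
    Module.Injective R ((coind I).obj k) :=
  inferInstanceAs (Module.Injective R (∀ j : V, Shrink.{0} (k ⟶ (Paths.of V).obj j) → I j))

noncomputable def toCoindApp (M : QuivRep R V) (φ : ∀ j, M.vtx j ⟶ I j) (k : Paths V) :
    M.obj k →ₗ[R] (coind I).obj k :=
  LinearMap.pi fun j => LinearMap.pi fun s => (φ j).hom ∘ₗ (M.map ((equivShrink _).symm s)).hom

@[simp]
theorem eval_toCoindApp (M : QuivRep R V) (φ : ∀ j, M.vtx j ⟶ I j) {k : Paths V}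
    (x : M.obj k) (j : V) (q : k ⟶ (Paths.of V).obj j) :
    coind.eval j q (M.toCoindApp φ k x) = φ j (M.map q x) := by
  change φ j (M.map ((equivShrink _).symm (equivShrink _ q)) x) = _
  rw [Equiv.symm_apply_apply]

noncomputable def toCoind (M : QuivRep R V) (φ : ∀ j, M.vtx j ⟶ I j) : M ⟶ coind I where
  app k := ModuleCat.ofHom (M.toCoindApp φ k)
  naturality k l p := by
    ext x : 2
    refine coind.ext fun j q => ?_
    change coind.eval j q (M.toCoindApp φ l (M.map p x)) =
      coind.eval j q ((coind I).map p (M.toCoindApp φ k x))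
    rw [coind.eval_map, eval_toCoindApp, eval_toCoindApp, Functor.map_comp]
    rfl

theorem mono_toCoind (M : QuivRep R V) {φ : ∀ j, M.vtx j ⟶ I j}
    (hφ : ∀ j, Function.Injective (φ j)) : Mono (M.toCoind φ) := by
  have (k : V) : Mono ((M.toCoind φ).app ((Paths.of V).obj k)) := by
    refine (ModuleCat.mono_iff_injective _).mpr fun x y h => hφ k ?_
    have := congrArg (coind.eval (I := I) k (𝟙 _)) h
    change coind.eval k (𝟙 _) (M.toCoindApp φ _ x) = coind.eval k (𝟙 _) (M.toCoindApp φ _ y) at this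
    simpa only [eval_toCoindApp, M.map_id, ConcreteCategory.id_apply] using this
  exact @NatTrans.mono_of_mono_app _ _ _ _ _ _ _ this

end Coinduced

section Forward

variable [∀ i j : V, Small.{0} (i ⟶ j)] (M : QuivRep R V) [Injective M]

noncomputable def retractCoind : Retract M (coind fun j => Injective.under (M.vtx j)) :=
  let φ (j : V) : M.vtx j ⟶ Injective.under (M.vtx j) := Injective.ι (M.vtx j)
  have : Mono (M.toCoind φ) :=
    M.mono_toCoind fun _ => (ModuleCat.mono_iff_injective _).mp inferInstance
  ⟨M.toCoind φ, Injective.factorThru (𝟙 M) _, Injective.comp_factorThru _ _⟩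

theorem isRIFibrant_of_injective : M.IsRIFibrant :=
  IsRIFibrant.of_retract M.retractCoind (coind_isRIFibrant _)

theorem injective_vtx_of_injective (j : V) : Module.Injective R (M.vtx j) := by
  have (i : V) : Module.Injective R ↥(Injective.under (M.vtx i)) :=
    Module.injective_module_of_injective_object R _
      (inj := inferInstanceAs (Injective (Injective.under (M.vtx i))))
  have hC : Injective ((coind fun i => Injective.under (M.vtx i)).obj ((Paths.of V).obj j)) :=
    Module.injective_object_of_injective_module R _
  exact Module.injective_module_of_injective_object R (M.vtx j)
    (inj := (M.retractCoind.map ((evaluation _ _).obj ((Paths.of V).obj j))).injective (i := hC))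

end Forward

theorem injective_of_isRIFibrant [IsNoetherianRing R] [IsNoetherianRing Rᵐᵒᵖ]
    [Module.Injective Rᵐᵒᵖ Rᵐᵒᵖ] (hV : WellFounded fun i j : V => Nonempty (j ⟶ i))
    {M : QuivRep R V} (hM : M.IsRIFibrant) (hinj : ∀ j, Module.Injective R (M.vtx j)) :
    Injective M := by
  refine ⟨fun {X Y} f g hg => ?_⟩
  have hg' (j : V) : Function.Injective (app g j) :=
    (ModuleCat.mono_iff_injective _).mp ((NatTrans.mono_iff_mono_app g).mp hg _)
  have hker (j : V) := Module.Injective.ker_of_surjective (hM j)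
  -- build the components vertex by vertex, each one after those at the targets of its arrows
  obtain ⟨H, hH⟩ := hV.exists_forall_of_step (β := fun j => Y.vtx j →ₗ[R] M.vtx j)
    (fun j h => h ∘ₗ app g j = app f j)
    (fun j F h => ∀ i (a : j ⟶ i), (M.arrowMap a).hom ∘ₗ h = F i ⟨a⟩ ∘ₗ (Y.arrowMap a).hom)
    fun j F hF => by
      have := hker j
      have hsq : (LinearMap.pi fun a : Σ i, (j ⟶ i) => (M.arrowMap a.2).hom) ∘ₗ app f j =
          (LinearMap.pi fun a : Σ i, (j ⟶ i) => F a.1 ⟨a.2⟩ ∘ₗ (Y.arrowMap a.2).hom) ∘ₗ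
            app g j :=
        LinearMap.ext fun x => funext fun a => (NatTrans.naturality_apply f _ x).symm.trans <|
          (LinearMap.congr_fun (hF a.1 ⟨a.2⟩) _).symm.trans <|
            congrArg (F a.1 ⟨a.2⟩) (NatTrans.naturality_apply g _ x)
      obtain ⟨h, hgh, hΦh⟩ := LinearMap.exists_lift_of_injective_ker (hM j) (hg' j) _ _ hsq
      exact ⟨h, hgh, fun i a => LinearMap.ext fun y => congrFun (LinearMap.congr_fun hΦh y) ⟨i, a⟩⟩
  refine ⟨Paths.liftNatTrans (fun j => ModuleCat.ofHom (H j)) fun a => ModuleCat.hom_ext ?_, ?_⟩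
  · exact ((hH _).2 _ a).symm
  · ext j x
    exact LinearMap.congr_fun (hH j).1 x

end QuivRep

/-- Over a quasi-Frobenius ring `R` and a finite acyclic quiver, a representation is an
injective object of the category of representations if and only if it is RI-fibrant and
pointwise injective. -/
theorem injectiveObject_iff_isRIFibrant_and_pointwise_injective
    (R : Type) [Ring R] [IsQuasiFrobenius R]
    {V : Type} [Quiver.{1} V] (hV : IsFiniteAcyclic V) (M : QuivRep R V) :
    Injective M ↔ (M.IsRIFibrant ∧ ∀ j : V, Module.Injective R ↥(M.vtx j)) := by
  have : IsNoetherianRing R := IsQuasiFrobenius.noetherian_left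
  have : IsNoetherianRing Rᵐᵒᵖ := IsQuasiFrobenius.noetherian_right
  have : Module.Injective Rᵐᵒᵖ Rᵐᵒᵖ := IsQuasiFrobenius.selfInjective_right
  have (i j : V) : Small.{0} (i ⟶ j) := (hV.2.1 i j).elim fun _ => Countable.toSmall _
  exact ⟨fun _ => ⟨M.isRIFibrant_of_injective, M.injective_vtx_of_injective⟩,
    fun ⟨hM, hinj⟩ => QuivRep.injective_of_isRIFibrant hV.wellFounded hM hinj⟩
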